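/- arXiv:2502.03874 — 2 statements merged into one kernel-verified Lean document; each statement's English description precedes it below -/
import Mathlib

section
/- No post-selection free n-cycle quantum paradoxes (Corollary 24, quantum trace form): Let m be a nonempty finite type, n ≥ 2, and let Q_0, …, Q_{n−1} ∈ Matrix m m ℂ be orthogonal projections such that each cyclically adjacent pair commutes: Q_i * Q_{i+1 mod n} = Q_{i+1 mod n} * Q_i for all i. For b : Bool write Q_i^b := Q_i if b = true and Q_i^b := 1 − Q_i if b = false. Let ρ ∈ Matrix m m ℂ be positive semidefinite with Tr ρ = 1. Then there is no v : Fin n → Bool such that: for every i = 0, …, n−2, Tr(Q_i^{v_i} * Q_{i+1}^{¬v_{i+1}} * ρ) = 0 and Tr(Q_i^{¬v_i} * Q_{i+1}^{v_{i+1}} * ρ) = 0, and for the closing edge, Tr(Q_{n−1}^{v_{n−1}} * Q_0^{v_0} * ρ) = 0 and Tr(Q_{n−1}^{¬v_{n−1}} * Q_0^{¬v_0} * ρ) = 0. -/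
open Matrix
open scoped ComplexOrder

/-- The projector onto the binary outcome `b` of the measurement with `true`-outcome
projector `Q`: it is `Q` for `b = true` and `1 - Q` for `b = false`. -/
noncomputable def projPow {m : Type*} [Fintype m] [DecidableEq m]
    (Q : Matrix m m ℂ) (b : Bool) : Matrix m m ℂ :=
  if b then Q else 1 - Q

/-! Write `P i` for the projection `projPow (Q i) (v i)`. A projection (indeed any positive
semidefinite matrix) `E` with `Tr (E * ρ) = 0` satisfies `E * ρ = 0`, and commuting projections
multiply to a projection, so every vanishing trace becomes an operator identity. Along a
non-closing edge `P i * (1 - P (i+1)) * ρ = 0 = (1 - P i) * P (i+1) * ρ`, i.e.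
`P i * ρ = P i * P (i+1) * ρ = P (i+1) * ρ`, so all `P i * ρ` coincide. The closing edge then
gives `P (n-1) * ρ = P (n-1) * P 0 * ρ = 0`, hence `ρ = (1 - P (n-1)) * (1 - P 0) * ρ = 0`,
contradicting `Tr ρ = 1`. -/

open scoped MatrixOrder in
theorem Matrix.PosSemidef.mul_eq_zero_of_trace_mul_eq_zero {𝕜 n : Type*} [RCLike 𝕜] [Fintype n]
    {A B : Matrix n n 𝕜} (hA : A.PosSemidef) (hB : B.PosSemidef) (h : (A * B).trace = 0) :
    A * B = 0 := by
  classical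
  obtain ⟨C, rfl⟩ := CStarAlgebra.nonneg_iff_eq_star_mul_self.mp hA.nonneg
  obtain ⟨D, rfl⟩ := CStarAlgebra.nonneg_iff_eq_star_mul_self.mp hB.nonneg
  simp only [star_eq_conjTranspose] at h ⊢
  -- `Tr (Cᴴ C Dᴴ D) = Tr ((D Cᴴ)ᴴ (D Cᴴ))`
  have hDC : D * Cᴴ = 0 := by
    rw [← trace_conjTranspose_mul_self_eq_zero_iff, ← h, trace_mul_comm (Cᴴ * C)]
    simp only [conjTranspose_mul, conjTranspose_conjTranspose, Matrix.mul_assoc]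
    rw [trace_mul_comm]
    simp only [Matrix.mul_assoc]
  calc Cᴴ * C * (Dᴴ * D) = Cᴴ * (D * Cᴴ)ᴴ * D := by
        simp only [conjTranspose_mul, conjTranspose_conjTranspose, Matrix.mul_assoc]
    _ = 0 := by rw [hDC, conjTranspose_zero, Matrix.mul_zero, Matrix.zero_mul]

open scoped MatrixOrder in
theorem IsStarProjection.mul_eq_zero_of_trace_mul_eq_zero {𝕜 n : Type*} [RCLike 𝕜] [Fintype n]
    {E ρ : Matrix n n 𝕜} (hE : IsStarProjection E) (hρ : ρ.PosSemidef)
    (h : (E * ρ).trace = 0) : E * ρ = 0 :=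
  (nonneg_iff_posSemidef.mp hE.nonneg).mul_eq_zero_of_trace_mul_eq_zero hρ h

section Ring

variable {R : Type*} [Ring R] {p q x : R}

theorem mul_eq_mul_of_mul_one_sub_mul_eq_zero (h₁ : p * (1 - q) * x = 0)
    (h₂ : (1 - p) * q * x = 0) : p * x = q * x := by
  simp only [mul_sub, sub_mul, mul_one, one_mul, sub_eq_zero] at h₁ h₂
  exact h₁.trans h₂.symm

theorem eq_zero_of_mul_eq_mul_of_mul_mul_eq_zero (hp : IsIdempotentElem p) (hpq : p * x = q * x)
    (h₁ : p * q * x = 0) (h₂ : (1 - p) * (1 - q) * x = 0) : x = 0 := by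
  have hpx : p * x = 0 := by rw [← h₁, mul_assoc, ← hpq, ← mul_assoc, hp.eq]
  simpa [sub_mul, mul_sub, mul_assoc, ← hpq, hpx] using h₂

end Ring

theorem Fin.apply_eq_apply_zero_of_forall_apply_eq_apply_succ {α : Type*} {n : ℕ}
    (f : Fin n → α) (h : ∀ (i : Fin n) (hi : (i : ℕ) + 1 < n), f i = f ⟨i + 1, hi⟩)
    (i : Fin n) : f i = f ⟨0, i.pos⟩ := by
  obtain ⟨k, hk⟩ := i
  induction k with
  | zero => rfl
  | succ k ih => exact (h ⟨k, by omega⟩ hk).symm.trans (ih _)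

theorem Fin.add_mk_one_of_lt {n : ℕ} (h1 : 1 < n) (i : Fin n) (h : (i : ℕ) + 1 < n) :
    i + ⟨1, h1⟩ = ⟨i + 1, h⟩ :=
  Fin.ext (by simp [Fin.val_add, Nat.mod_eq_of_lt h])

theorem Fin.add_mk_one_of_eq {n : ℕ} (h1 : 1 < n) (i : Fin n) (h : (i : ℕ) + 1 = n) :
    i + ⟨1, h1⟩ = ⟨0, i.pos⟩ :=
  Fin.ext (by simp [Fin.val_add, h])

section projPow

variable {m : Type*} [Fintype m] [DecidableEq m]

theorem projPow_not (Q : Matrix m m ℂ) (b : Bool) : projPow Q (!b) = 1 - projPow Q b := by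
  cases b <;> simp [projPow]

theorem IsStarProjection.projPow {Q : Matrix m m ℂ} (hQ : IsStarProjection Q) (b : Bool) :
    IsStarProjection (projPow Q b) := by
  cases b
  · exact hQ.one_sub
  · exact hQ

theorem Commute.projPow {P Q : Matrix m m ℂ} (h : Commute P Q) (b c : Bool) :
    Commute (projPow P b) (projPow Q c) := by
  have h₁ : ∀ c, Commute P (_root_.projPow Q c) := fun c => by
    cases c
    · exact (Commute.one_right P).sub_right h
    · exact h
  cases b
  · exact (Commute.one_left _).sub_left (h₁ c)
  · exact h₁ c

end projPow

/-- **No post-selection free `n`-cycle quantum paradoxes** (Corollary 24, quantum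
trace form).  For cyclically commuting orthogonal projections `Q_0, …, Q_{n-1}` and
a normalized positive semidefinite state `ρ`, there is no Boolean assignment `v`
making every non-closing edge perfectly correlated with `v` and the closing edge
perfectly anti-correlated with `v`. -/
theorem no_postselection_free_ncycle_quantum_paradox
    {m : Type*} [Fintype m] [DecidableEq m]
    (n : ℕ) (hn : 2 ≤ n) (Q : Fin n → Matrix m m ℂ)
    (hproj : ∀ i, (Q i)ᴴ = Q i ∧ Q i * Q i = Q i)
    (hcomm : ∀ i : Fin n, Q i * Q (i + ⟨1, by omega⟩) = Q (i + ⟨1, by omega⟩) * Q i)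
    (ρ : Matrix m m ℂ) (hρ : ρ.PosSemidef) (htr : ρ.trace = 1) :
    ¬ ∃ v : Fin n → Bool,
        (∀ i : Fin n, ∀ h : (i : ℕ) + 1 < n,
          (projPow (Q i) (v i) * projPow (Q ⟨(i : ℕ) + 1, h⟩) (!(v ⟨(i : ℕ) + 1, h⟩)) * ρ).trace = 0 ∧
          (projPow (Q i) (!(v i)) * projPow (Q ⟨(i : ℕ) + 1, h⟩) (v ⟨(i : ℕ) + 1, h⟩) * ρ).trace = 0) ∧
        (∀ i : Fin n, (i : ℕ) + 1 = n →
          (projPow (Q i) (v i) * projPow (Q ⟨0, by omega⟩) (v ⟨0, by omega⟩) * ρ).trace = 0 ∧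
          (projPow (Q i) (!(v i)) * projPow (Q ⟨0, by omega⟩) (!(v ⟨0, by omega⟩)) * ρ).trace = 0) := by
  rintro ⟨v, hedge, hclose⟩
  have hQ (i : Fin n) : IsStarProjection (Q i) := ⟨(hproj i).2, (hproj i).1⟩
  have vanish {i j : Fin n} (hij : Commute (Q i) (Q j)) {b c : Bool}
      (h : (projPow (Q i) b * projPow (Q j) c * ρ).trace = 0) :
      projPow (Q i) b * projPow (Q j) c * ρ = 0 :=
    (((hQ i).projPow b).mul ((hQ j).projPow c) (hij.projPow b c)).mul_eq_zero_of_trace_mul_eq_zero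
      hρ h
  have hconst := Fin.apply_eq_apply_zero_of_forall_apply_eq_apply_succ
    (fun i => projPow (Q i) (v i) * ρ) fun i hi => by
      have hij : Commute (Q i) (Q ⟨i + 1, hi⟩) := Fin.add_mk_one_of_lt (by omega) i hi ▸ hcomm i
      obtain ⟨h₁, h₂⟩ := hedge i hi
      refine mul_eq_mul_of_mul_one_sub_mul_eq_zero ?_ ?_
      · simpa only [projPow_not] using vanish hij h₁
      · simpa only [projPow_not] using vanish hij h₂
  set last : Fin n := ⟨n - 1, by omega⟩
  have hlast : (last : ℕ) + 1 = n := by simp only [last]; omega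
  have hclosing : Commute (Q last) (Q ⟨0, by omega⟩) :=
    Fin.add_mk_one_of_eq (by omega) last hlast ▸ hcomm last
  obtain ⟨h₁, h₂⟩ := hclose last hlast
  have hρ0 : ρ = 0 :=
    eq_zero_of_mul_eq_mul_of_mul_mul_eq_zero ((hQ last).projPow (v last)).isIdempotentElem
      (hconst last) (vanish hclosing h₁) (by simpa only [projPow_not] using vanish hclosing h₂)
  simp [hρ0] at htr
end

section
/- Triple reduction step in the symmetric chain argument (key intermediate claim in the proof of Theorem 21): Let n be a nonempty finite type, let ρ ∈ Matrix n n ℂ be positive semidefinite, and let π_1, π_2, π_3 ∈ Matrix n n ℂ be orthogonal projections with π_2 * π_3 = π_3 * π_2 (no commutation assumed between π_1 and π_2 or between π_1 and π_3). If Tr(π_1 * π_2 * ρ) = Tr(π_1 * ρ) = Tr(π_2 * ρ) and Tr(π_2 * π_3 * ρ) = Tr(π_2 * ρ) = Tr(π_3 * ρ), then Tr(π_1 * π_3 * ρ) = Tr(π_1 * ρ) = Tr(π_3 * ρ). -/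
/-!
For a state `ρ` and orthogonal projections `P`, `Q`,
`Tr((P - Q) ρ (P - Q)) = Tr(Pρ) + Tr(Qρ) - 2 Re Tr(PQρ)`, so the hypothesis
`Tr(PQρ) = Tr(Pρ) = Tr(Qρ)` makes this trace vanish; positivity of `ρ` then forces
`ρ (P - Q) = 0`, i.e. `Pρ = Qρ`. This relation is transitive, so `π₁ρ = π₂ρ = π₃ρ`, and
`π₁π₃ρ = π₁π₁ρ = π₁ρ`.
-/

open Matrix
open scoped ComplexOrder

namespace Matrix

variable {𝕜 m n : Type*} [RCLike 𝕜] [Fintype m] [Fintype n]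

theorem PosSemidef.trace_conjTranspose_mul_mul_eq_zero_iff {ρ : Matrix n n 𝕜}
    (hρ : ρ.PosSemidef) (X : Matrix n m 𝕜) : (Xᴴ * ρ * X).trace = 0 ↔ ρ * X = 0 := by
  classical
  open scoped MatrixOrder in
  obtain ⟨B, rfl⟩ := CStarAlgebra.nonneg_iff_eq_star_mul_self.mp hρ.nonneg
  rw [star_eq_conjTranspose, Matrix.mul_assoc, conjTranspose_mul_self_mul_eq_zero,
    Matrix.mul_assoc, ← Matrix.mul_assoc Xᴴ, ← conjTranspose_mul,
    trace_conjTranspose_mul_self_eq_zero_iff]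

theorem IsHermitian.star_trace_mul_mul {A B C : Matrix n n 𝕜} (hA : A.IsHermitian)
    (hB : B.IsHermitian) (hC : C.IsHermitian) : star (A * B * C).trace = (C * B * A).trace := by
  rw [← trace_conjTranspose, conjTranspose_mul, conjTranspose_mul, hA.eq, hB.eq, hC.eq,
    Matrix.mul_assoc]

theorem IsStarProjection.mul_eq_mul_of_trace_eq {ρ P Q : Matrix n n 𝕜} (hP : IsStarProjection P)
    (hQ : IsStarProjection Q) (hρ : ρ.PosSemidef)
    (hPQ : (P * Q * ρ).trace = (P * ρ).trace) (hPρ : (P * ρ).trace = (Q * ρ).trace) :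
    P * ρ = Q * ρ := by
  have hPh : P.IsHermitian := hP.isSelfAdjoint
  have hQh : Q.IsHermitian := hQ.isSelfAdjoint
  have hPρ_real : star (P * ρ).trace = (P * ρ).trace := by
    rw [← trace_conjTranspose, conjTranspose_mul, hPh.eq, hρ.isHermitian.eq, trace_mul_comm]
  have hQP : (Q * P * ρ).trace = star (P * ρ).trace := by
    rw [← hPQ, hPh.star_trace_mul_mul hQh hρ.isHermitian, Matrix.mul_assoc ρ, trace_mul_comm ρ]
  have hX : (P - Q)ᴴ = P - Q := by rw [conjTranspose_sub, hPh.eq, hQh.eq]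
  have hzero : ((P - Q)ᴴ * ρ * (P - Q)).trace = 0 :=
    calc ((P - Q)ᴴ * ρ * (P - Q)).trace = ((P - Q) * (P - Q) * ρ).trace := by
          rw [hX, trace_mul_comm, ← Matrix.mul_assoc]
      _ = (P * ρ).trace - (P * Q * ρ).trace - (Q * P * ρ).trace + (Q * ρ).trace := by
          rw [sub_mul, mul_sub, mul_sub, hP.isIdempotentElem.eq, hQ.isIdempotentElem.eq]
          simp only [sub_mul, trace_sub]
          ring
      _ = 0 := by rw [hPQ, hQP, hPρ_real, ← hPρ]; ring
  have hρPQ : ρ * P = ρ * Q := by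
    rw [← sub_eq_zero, ← mul_sub, ← hρ.trace_conjTranspose_mul_mul_eq_zero_iff, hzero]
  simpa [conjTranspose_mul, hPh.eq, hQh.eq, hρ.isHermitian.eq] using congrArg conjTranspose hρPQ

end Matrix

theorem symmetric_triple_reduction_general {n : Type*} [Fintype n]
    (ρ : Matrix n n ℂ) (hρ : ρ.PosSemidef)
    (π₁ π₂ π₃ : Matrix n n ℂ)
    (h1h : π₁ᴴ = π₁) (h1p : π₁ * π₁ = π₁)
    (h2h : π₂ᴴ = π₂) (h2p : π₂ * π₂ = π₂)
    (h3h : π₃ᴴ = π₃) (h3p : π₃ * π₃ = π₃)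
    (h12 : (π₁ * π₂ * ρ).trace = (π₁ * ρ).trace ∧ (π₁ * ρ).trace = (π₂ * ρ).trace)
    (h23 : (π₂ * π₃ * ρ).trace = (π₂ * ρ).trace ∧ (π₂ * ρ).trace = (π₃ * ρ).trace) :
    (π₁ * π₃ * ρ).trace = (π₁ * ρ).trace ∧ (π₁ * ρ).trace = (π₃ * ρ).trace := by
  have hπ₁ : IsStarProjection π₁ := ⟨h1p, h1h⟩
  have hπ₂ : IsStarProjection π₂ := ⟨h2p, h2h⟩
  have hπ₃ : IsStarProjection π₃ := ⟨h3p, h3h⟩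
  have h₁₂ := hπ₁.mul_eq_mul_of_trace_eq hπ₂ hρ h12.1 h12.2
  have h₂₃ := hπ₂.mul_eq_mul_of_trace_eq hπ₃ hρ h23.1 h23.2
  refine ⟨?_, h12.2.trans h23.2⟩
  rw [Matrix.mul_assoc, ← h₂₃, ← h₁₂, ← Matrix.mul_assoc, h1p]

/-- **Triple reduction step** in the symmetric chain argument (key intermediate claim
in the proof of Theorem 21).  Only `π₂` and `π₃` are assumed to commute. -/
theorem symmetric_triple_reduction {n : Type*} [Fintype n] [DecidableEq n] [Nonempty n]
    (ρ : Matrix n n ℂ) (hρ : ρ.PosSemidef)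
    (π₁ π₂ π₃ : Matrix n n ℂ)
    (h1h : π₁ᴴ = π₁) (h1p : π₁ * π₁ = π₁)
    (h2h : π₂ᴴ = π₂) (h2p : π₂ * π₂ = π₂)
    (h3h : π₃ᴴ = π₃) (h3p : π₃ * π₃ = π₃)
    (hcomm : π₂ * π₃ = π₃ * π₂)
    (h12 : (π₁ * π₂ * ρ).trace = (π₁ * ρ).trace ∧ (π₁ * ρ).trace = (π₂ * ρ).trace)
    (h23 : (π₂ * π₃ * ρ).trace = (π₂ * ρ).trace ∧ (π₂ * ρ).trace = (π₃ * ρ).trace) :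
    (π₁ * π₃ * ρ).trace = (π₁ * ρ).trace ∧ (π₁ * ρ).trace = (π₃ * ρ).trace :=
  symmetric_triple_reduction_general ρ hρ π₁ π₂ π₃ h1h h1p h2h h2p h3h h3p h12 h23
end
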